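/- For every real number x > 0, 2Φ(x) − 1 > xφ(x)·(x² + 1 + √(x⁴ + 2x² + 9))/2. -/

import Mathlib

open Real Set MeasureTheory

/-- The standard normal probability density function. -/
noncomputable def phi (x : ℝ) : ℝ := (Real.sqrt (2 * Real.pi))⁻¹ * Real.exp (-x ^ 2 / 2)

/-- The standard normal cumulative distribution function. -/
noncomputable def Phi (x : ℝ) : ℝ := ∫ r in Set.Iic x, phi r

lemma phi_eq : phi = fun x => (Real.sqrt (2 * Real.pi))⁻¹ * Real.exp (-(1/2) * x ^ 2) := by
  funext x; unfold phi; ring_nf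

lemma phi_pos (x : ℝ) : 0 < phi x := by
  unfold phi; positivity

lemma integrable_phi : Integrable phi := by
  have h : Integrable (fun x : ℝ => Real.exp (-(1/2) * x ^ 2)) :=
    integrable_exp_neg_mul_sq (by norm_num)
  rw [phi_eq]
  exact h.const_mul _

lemma integral_phi : ∫ x : ℝ, phi x = 1 := by
  have h : ∫ x : ℝ, Real.exp (-(1/2) * x ^ 2) = Real.sqrt (Real.pi / (1/2)) :=
    integral_gaussian (1/2)
  rw [phi_eq, MeasureTheory.integral_const_mul, h]
  have : Real.pi / (1/2) = 2 * Real.pi := by ring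
  rw [this, inv_mul_cancel₀]
  positivity

lemma continuous_phi : Continuous phi := by
  unfold phi
  continuity

lemma Phi_zero : Phi 0 = 1/2 := by
  have hsym : (∫ r in Set.Iic (0:ℝ), phi r) = ∫ r in Set.Ioi (0:ℝ), phi r := by
    have h := integral_comp_neg_Iic (0:ℝ) phi
    simp only [neg_zero] at h
    rw [← h]
    apply setIntegral_congr_fun measurableSet_Iic
    intro r _
    unfold phi; ring_nf
  have hadd : (∫ r in Set.Iic (0:ℝ), phi r) + (∫ r in Set.Ioi (0:ℝ), phi r) = 1 := by
    rw [intervalIntegral.integral_Iic_add_Ioi integrable_phi.integrableOn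
      integrable_phi.integrableOn, integral_phi]
  unfold Phi
  linarith [hsym, hadd]

lemma Phi_sub (x : ℝ) : Phi x - Phi 0 = ∫ t in (0:ℝ)..x, phi t := by
  unfold Phi
  exact intervalIntegral.integral_Iic_sub_Iic integrable_phi.integrableOn integrable_phi.integrableOn

lemma hasDerivAt_phi (t : ℝ) : HasDerivAt phi (-t * phi t) t := by
  have h1 : HasDerivAt (fun y : ℝ => -y ^ 2 / 2) (-(2 * t ^ 1) / 2) t :=
    ((hasDerivAt_pow 2 t).neg).div_const 2
  have h2 := (h1.exp).const_mul (Real.sqrt (2 * Real.pi))⁻¹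
  have he : HasDerivAt phi ((Real.sqrt (2 * Real.pi))⁻¹ *
      (Real.exp (-t ^ 2 / 2) * (-(2 * t ^ 1) / 2))) t := h2
  convert he using 1
  unfold phi
  ring

noncomputable def sfun (t : ℝ) : ℝ := Real.sqrt (t ^ 4 + 2 * t ^ 2 + 9)

lemma sfun_pos (t : ℝ) : 0 < sfun t := Real.sqrt_pos.2 (by positivity)

lemma sfun_sq (t : ℝ) : sfun t ^ 2 = t ^ 4 + 2 * t ^ 2 + 9 := by
  unfold sfun
  rw [sq_sqrt]; positivity

lemma continuous_sfun : Continuous sfun :=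
  Real.continuous_sqrt.comp (by continuity)

lemma hasDerivAt_sfun (t : ℝ) :
    HasDerivAt sfun ((4 * t ^ 3 + 4 * t) / (2 * sfun t)) t := by
  have hin : HasDerivAt (fun y : ℝ => y ^ 4 + 2 * y ^ 2 + 9) (4 * t ^ 3 + 4 * t) t := by
    have h4 := hasDerivAt_pow 4 t
    have h2 := (hasDerivAt_pow 2 t).const_mul (2:ℝ)
    have := (h4.add h2).add_const (9:ℝ)
    exact this.congr_deriv (by norm_num <;> ring)
  have hne : t ^ 4 + 2 * t ^ 2 + 9 ≠ 0 := by positivity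
  exact hin.sqrt hne

noncomputable def G (t : ℝ) : ℝ := t * phi t * ((t ^ 2 + 1 + sfun t) / 2)

noncomputable def G' (t : ℝ) : ℝ :=
  (1 * phi t + t * (-t * phi t)) * ((t ^ 2 + 1 + sfun t) / 2) +
    t * phi t * ((2 * t + (4 * t ^ 3 + 4 * t) / (2 * sfun t)) / 2)

lemma hasDerivAt_G (t : ℝ) : HasDerivAt G (G' t) t := by
  have h1 : HasDerivAt (fun y : ℝ => y * phi y) (1 * phi t + t * (-t * phi t)) t :=
    (hasDerivAt_id t).mul (hasDerivAt_phi t)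
  have h2 : HasDerivAt (fun y : ℝ => (y ^ 2 + 1 + sfun y) / 2)
      ((2 * t + (4 * t ^ 3 + 4 * t) / (2 * sfun t)) / 2) t := by
    have hp : HasDerivAt (fun y : ℝ => y ^ 2 + 1) (2 * t) t := by
      simpa using (hasDerivAt_pow 2 t).add_const (1:ℝ)
    exact ((hp.add (hasDerivAt_sfun t)).div_const 2)
  exact h1.mul h2

lemma continuous_G' : Continuous G' := by
  have hq : Continuous (fun t : ℝ => (4 * t ^ 3 + 4 * t) / (2 * sfun t)) := by
    apply Continuous.div (by continuity) (continuous_const.mul continuous_sfun)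
    intro t
    have := sfun_pos t
    exact (mul_pos two_pos this).ne'
  unfold G'
  apply Continuous.add
  · exact ((continuous_const.mul continuous_phi).add
      (continuous_id.mul (continuous_id.neg.mul continuous_phi))).mul
      ((((continuous_pow 2).add continuous_const).add continuous_sfun).div_const 2)
  · exact (continuous_id.mul continuous_phi).mul
      (((continuous_const.mul continuous_id).add hq).div_const 2)

lemma key_ineq (t : ℝ) (ht : 0 < t) :
    sfun t * (t ^ 4 - 2 * t ^ 2 + 3) > 9 - 5 * t ^ 2 + t ^ 4 - t ^ 6 := by
  have hs := sfun_pos t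
  have hs2 := sfun_sq t
  have hA : (0:ℝ) < t ^ 4 - 2 * t ^ 2 + 3 := by nlinarith [sq_nonneg (t ^ 2 - 1)]
  have hsA : 0 < sfun t * (t ^ 4 - 2 * t ^ 2 + 3) := mul_pos hs hA
  have hsq : (sfun t * (t ^ 4 - 2 * t ^ 2 + 3)) ^ 2 =
      (9 - 5 * t ^ 2 + t ^ 4 - t ^ 6) ^ 2 + 32 * t ^ 4 := by
    have h : (sfun t * (t ^ 4 - 2 * t ^ 2 + 3)) ^ 2 =
        sfun t ^ 2 * (t ^ 4 - 2 * t ^ 2 + 3) ^ 2 := by ring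
    rw [h, hs2]; ring
  nlinarith [pow_pos ht 4, hsA, hsq]

lemma G'_lt (t : ℝ) (ht : 0 < t) : G' t < 2 * phi t := by
  have hs := sfun_pos t
  have hs2 := sfun_sq t
  have hphi := phi_pos t
  have hkey := key_ineq t ht
  unfold G'
  set s := sfun t with hsdef
  set e := (4 * t ^ 3 + 4 * t) / (2 * s) with hedef
  have hsne : s ≠ 0 := ne_of_gt hs
  have he : e * s = 2 * t ^ 3 + 2 * t := by
    rw [hedef]; field_simp; ring
  have h2s : (0:ℝ) < 2 * s := by linarith
  rw [← mul_lt_mul_iff_of_pos_right h2s]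
  have he2 : t * phi t * (e * s) = t * phi t * (2 * t ^ 3 + 2 * t) := by rw [he]
  have hps2 : (1 - t ^ 2) * phi t * s ^ 2 =
      (1 - t ^ 2) * phi t * (t ^ 4 + 2 * t ^ 2 + 9) := by rw [hs2]
  nlinarith [mul_pos hphi (sub_pos.2 hkey), he2, hps2]

theorem Phi_gt (x : ℝ) (hx : 0 < x) :
    2 * Phi x - 1 >
      x * phi x * (x ^ 2 + 1 + Real.sqrt (x ^ 4 + 2 * x ^ 2 + 9)) / 2 := by
  have hG0 : G 0 = 0 := by simp [G]
  have hGx : G x = x * phi x * (x ^ 2 + 1 + Real.sqrt (x ^ 4 + 2 * x ^ 2 + 9)) / 2 := by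
    unfold G sfun; ring
  have hint2 : IntervalIntegrable G' volume 0 x := continuous_G'.intervalIntegrable 0 x
  have hFTC : G x - G 0 = ∫ t in (0:ℝ)..x, G' t := by
    rw [eq_comm]
    exact intervalIntegral.integral_eq_sub_of_hasDerivAt (fun t _ => hasDerivAt_G t) hint2
  have hpos : 0 < ∫ t in (0:ℝ)..x, (2 * phi t - G' t) := by
    apply intervalIntegral.intervalIntegral_pos_of_pos_on
    · exact ((continuous_const.mul continuous_phi).sub continuous_G').intervalIntegrable 0 x
    · intro t ht
      have := G'_lt t ht.1
      linarith
    · exact hx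
  have hsplit : (∫ t in (0:ℝ)..x, (2 * phi t - G' t)) =
      2 * (∫ t in (0:ℝ)..x, phi t) - ∫ t in (0:ℝ)..x, G' t := by
    rw [intervalIntegral.integral_sub (f := fun t => 2 * phi t) ((continuous_const.mul continuous_phi).intervalIntegrable 0 x) hint2]
    congr 1
    exact intervalIntegral.integral_const_mul 2 phi
  have hPhi := Phi_sub x
  have hPhi0 := Phi_zero
  rw [hsplit] at hpos
  linarith [hpos, hFTC, hG0, hGx, hPhi]
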